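/- Let p be a prime, m ≥ 1 and 1 ≤ s ≤ m integers, λ a positive integer with p ∣ λ, and π a permutation of {s, s+1, …, m}. Fix g_1, …, g_m, g ∈ ℤ_λ and an arbitrary function h : ℤ_p^{s−1} → ℤ_λ (with h = 0 when s = 1). Define f : ℤ_p^m → ℤ_λ by f(v_1, …, v_m) = (λ/p)·Σ_{i=s}^{m−1} v_{π(i)} v_{π(i+1)} + Σ_{i=1}^{m} g_i v_i + g + h(v_1, …, v_{s−1}) (mod λ), and for each γ ∈ ℤ_p define a^γ = f + (λ/p)·v_{π(s)}·γ (mod λ). Let i and j be integers in {0, …, p^m − 1} with base-p digit vectors (i_1, …, i_m) and (j_1, …, j_m) such that i_{π(s)} = j_{π(s)} and such that i_{π(l)} ≠ j_{π(l)} for some l ∈ {s+1, …, m}; let φ be the smallest such l (so φ − 1 ≥ s and i_{π(l')} = j_{π(l')} for all l' ∈ {s, …, φ−1}). For each δ ∈ {1, …, p−1}, let i^δ (respectively j^δ) be the integer in {0, …, p^m − 1} obtained from i (respectively j) by replacing the digit in position π(φ−1) by (i_{π(φ−1)} − δ) mod p (respectively (j_{π(φ−1)} − δ) mod p), leaving all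 other digits unchanged. Then for every γ ∈ ℤ_p, Σ_{δ=1}^{p−1} ω_λ^{a^γ(i^δ digits) − a^γ(j^δ digits)} + ω_λ^{a^γ(i_1,…,i_m) − a^γ(j_1,…,j_m)} = 0, where ω_λ = exp(2π√−1/λ). -/

import Mathlib

open Finset

/-- `eZMod q x = ω_q^x` where `ω_q = exp(2π√-1/q)`. -/
noncomputable def eZMod (q : ℕ) (x : ZMod q) : ℂ :=
  Complex.exp (2 * (Real.pi : ℂ) * Complex.I * (x.val : ℂ) / (q : ℂ))

/-- Aperiodic autocorrelation of a sequence of length `L` at shift `τ`. -/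
noncomputable def aacf (L : ℕ) (a : ℕ → ℂ) (τ : ℕ) : ℂ :=
  ∑ i ∈ Finset.range (L - τ), a i * (starRingEnd ℂ) (a (i + τ))

/-- `dig p i k` is the `k`-th base-`p` digit (1-indexed) of `i`, viewed in `ℤ_p`. -/
def dig (p i : ℕ) (k : ℕ) : ZMod p :=
  (((i / p ^ (k - 1)) % p : ℕ) : ZMod p)

/-!
Changing the digit in position `π (φ - 1)` by `-δ` in both `i` and `j` only affects the
chain terms `v (π k) * v (π (k + 1))` meeting that position, and since `i` and `j` agree in
positions `π s, …, π (φ - 1)`, the exponent difference moves by exactly `(λ/p)·δ·c` with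
`c = j_{π φ} - i_{π φ} ≠ 0`; everything else (the linear part, `h`, the `γ` term) cancels.
Together with the unchanged term (`δ = 0`), the sum is therefore `ω_λ^D`, with
`D = a^γ(i) - a^γ(j)`, times a full sum of the nontrivial character `δ ↦ ω_p^{δ c}` of `ℤ_p`, which vanishes.
-/

open Function

lemma eZMod_eq_stdAddChar {q : ℕ} [NeZero q] (x : ZMod q) : eZMod q x = ZMod.stdAddChar x := by
  rw [ZMod.stdAddChar_apply, ZMod.toCircle_apply, eZMod]

lemma ZMod.sum_Icc_one_add_zero {M : Type*} [AddCommMonoid M] (n : ℕ) [NeZero n]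
    (F : ZMod n → M) : ∑ k ∈ Icc 1 (n - 1), F k + F 0 = ∑ t, F t := by
  have hrange : range n = insert 0 (Icc 1 (n - 1)) := by
    ext k; simp only [mem_range, mem_insert, mem_Icc]; have := NeZero.pos n; omega
  calc ∑ k ∈ Icc 1 (n - 1), F k + F 0 = ∑ k ∈ range n, F k := by
        rw [hrange, sum_insert (by simp), Nat.cast_zero, add_comm]
    _ = ∑ t, F t := by
      refine sum_nbij' (↑) ZMod.val (by simp) (fun t _ => mem_range.2 t.val_lt) ?_ (by simp)
        (by simp)
      intro k hk
      simp [ZMod.val_natCast, Nat.mod_eq_of_lt (mem_range.1 hk)]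

section ScaledCast

variable {p lam : ℕ} (hpl : p ∣ lam)

/-- `t ↦ (λ/p)·t`, through which all the `(λ/p)·…` terms of `f` and `a` factor; it turns
`ω_λ` into `ω_p` (`stdAddChar_scaledCastHom`). -/
def scaledCastHom : ZMod p →+ ZMod lam :=
  ZMod.lift p ⟨(AddMonoidHom.mulLeft ((lam / p : ℕ) : ZMod lam)).comp (Int.castAddHom _), by
    simp [← Nat.cast_mul, Nat.div_mul_cancel hpl]⟩

lemma scaledCastHom_intCast (n : ℤ) :
    scaledCastHom hpl (n : ZMod p) = ((lam / p : ℕ) : ZMod lam) * n :=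
  ZMod.lift_coe _ _ n

lemma scaledCastHom_natCast (n : ℕ) :
    scaledCastHom hpl (n : ZMod p) = ((lam / p : ℕ) : ZMod lam) * n := by
  simpa using scaledCastHom_intCast hpl n

lemma natCast_div_mul_val_mul_val [NeZero p] (x y : ZMod p) :
    ((lam / p : ℕ) : ZMod lam) * ((x.val : ZMod lam) * (y.val : ZMod lam))
      = scaledCastHom hpl (x * y) := by
  rw [← Nat.cast_mul, ← scaledCastHom_natCast, Nat.cast_mul, ZMod.natCast_zmod_val,
    ZMod.natCast_zmod_val]

lemma stdAddChar_scaledCastHom [NeZero p] [NeZero lam] (t : ZMod p) :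
    ZMod.stdAddChar (scaledCastHom hpl t) = ZMod.stdAddChar t := by
  obtain ⟨n, rfl⟩ := ZMod.intCast_surjective t
  rw [scaledCastHom_intCast, ← Int.cast_natCast, ← Int.cast_mul, ZMod.stdAddChar_coe,
    ZMod.stdAddChar_coe]
  obtain ⟨N, rfl⟩ := hpl
  have hN : (N : ℂ) ≠ 0 := by exact_mod_cast right_ne_zero_of_mul (NeZero.ne (p * N))
  have hp : (p : ℂ) ≠ 0 := by exact_mod_cast NeZero.ne p
  rw [Nat.mul_div_cancel_left _ (NeZero.pos p)]
  push_cast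
  field_simp

end ScaledCast

lemma sum_Icc_eZMod_add_scaledCastHom {p lam : ℕ} [NeZero p] [NeZero lam] (hpl : p ∣ lam)
    (D : ZMod lam) {b : ZMod p} (hb : b ≠ 0) :
    ∑ δ ∈ Icc 1 (p - 1), eZMod lam (D + scaledCastHom hpl (δ * b)) + eZMod lam D = 0 := by
  rw [show eZMod lam D = eZMod lam (D + scaledCastHom hpl (0 * b)) by simp,
    ZMod.sum_Icc_one_add_zero p (fun t => eZMod lam (D + scaledCastHom hpl (t * b)))]
  simp only [eZMod_eq_stdAddChar, AddChar.map_add_eq_mul, stdAddChar_scaledCastHom, ← mul_sum]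
  rw [AddChar.sum_mulShift b (ZMod.isPrimitive_stdAddChar p), if_neg hb, Nat.cast_zero, mul_zero]

lemma sum_apply_update_sub_sum_apply_update {ι α M : Type*} [DecidableEq ι] [AddCommGroup M]
    (S : Finset ι) (ℓ : ι → α → M) {x y : ι → α} {q : ι} (hq : x q = y q) (b : α) :
    ∑ k ∈ S, ℓ k (update x q b k) - ∑ k ∈ S, ℓ k (update y q b k)
      = ∑ k ∈ S, ℓ k (x k) - ∑ k ∈ S, ℓ k (y k) := by
  simp only [← sum_sub_distrib]
  refine sum_congr rfl fun k _ => ?_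
  rcases eq_or_ne k q with rfl | hk
  · simp [hq]
  · simp [update_of_ne hk]

section ChainForm

variable {R : Type*} [CommRing R] (π : Equiv.Perm ℕ) (s m : ℕ)

def chainForm (v : ℕ → R) : R := ∑ k ∈ Ico s m, v (π k) * v (π (k + 1))

variable {π s m}

lemma chainForm_update_sub_chainForm_update {φ : ℕ} (hsφ : s < φ) (hφm : φ ≤ m) {x y : ℕ → R}
    (hxy : ∀ l ∈ Icc s (φ - 1), x (π l) = y (π l)) (d : R) :
    chainForm π s m (update x (π (φ - 1)) (x (π (φ - 1)) + d))
        - chainForm π s m (update y (π (φ - 1)) (y (π (φ - 1)) + d))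
      = chainForm π s m x - chainForm π s m y + d * (x (π φ) - y (π φ)) := by
  have hq : x (π (φ - 1)) = y (π (φ - 1)) := hxy _ (mem_Icc.2 ⟨by omega, le_rfl⟩)
  rw [← sub_eq_iff_eq_add', hq]
  simp only [chainForm, ← sum_sub_distrib]
  rw [sum_eq_single_of_mem (φ - 1) (mem_Ico.2 ⟨by omega, by omega⟩)]
  · have hφ : π φ ≠ π (φ - 1) := fun e => by have := π.injective e; omega
    rw [Nat.sub_add_cancel (by omega : 1 ≤ φ)]
    simp only [update_self, update_of_ne hφ, hq]
    ring
  · intro k hks hkφ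
    have hk : π k ≠ π (φ - 1) := fun e => hkφ (π.injective e)
    simp only [update_of_ne hk]
    by_cases hk1 : π (k + 1) = π (φ - 1)
    · have hxyk : x (π k) = y (π k) :=
        hxy k (mem_Icc.2 ⟨(mem_Ico.1 hks).1, by have := π.injective hk1; omega⟩)
      rw [hk1, update_self, update_self, hxyk, hq]
      ring
    · simp only [update_of_ne hk1, sub_self]

lemma apply_update_sub_apply_update_of_chainForm {M : Type*} [AddCommGroup M] (ψ : R →+ M)
    {φ : ℕ} (hsφ : s < φ) (hφm : φ ≤ m) (γ : R) (S : Finset ℕ) (ℓ : ℕ → R → M) (h : (ℕ → R) → M)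
    (hh : ∀ v b, h (update v (π (φ - 1)) b) = h v) {A : (ℕ → R) → M}
    (hA : ∀ v, A v = ψ (chainForm π s m v + v (π s) * γ) + ∑ k ∈ S, ℓ k (v k) + h v)
    {x y : ℕ → R} (hxy : ∀ l ∈ Icc s (φ - 1), x (π l) = y (π l)) (d : R) :
    A (update x (π (φ - 1)) (x (π (φ - 1)) + d)) - A (update y (π (φ - 1)) (y (π (φ - 1)) + d))
      = A x - A y + ψ (d * (x (π φ) - y (π φ))) := by
  have hC := congrArg ψ (chainForm_update_sub_chainForm_update hsφ hφm hxy d)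
  have hq : x (π (φ - 1)) = y (π (φ - 1)) := hxy _ (mem_Icc.2 ⟨by omega, le_rfl⟩)
  have hs : x (π s) = y (π s) := hxy s (mem_Icc.2 ⟨le_rfl, by omega⟩)
  rw [map_sub, map_add, map_sub] at hC
  rw [hq] at hC ⊢
  have hL := sum_apply_update_sub_sum_apply_update S ℓ hq (y (π (φ - 1)) + d)
  have hus : update x (π (φ - 1)) (y (π (φ - 1)) + d) (π s)
      = update y (π (φ - 1)) (y (π (φ - 1)) + d) (π s) := by
    simp only [update_apply, hs]
  rw [hA, hA, hA x, hA y, hh, hh, hus, hs, map_add, map_add, map_add, map_add,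
    eq_add_of_sub_eq hC, eq_add_of_sub_eq hL]
  abel

end ChainForm

theorem stmt10_general (p m s lam : ℕ)
    (hlam : 0 < lam) (hpl : p ∣ lam)
    (π : Equiv.Perm ℕ) (hπ : ∀ i ∈ Finset.Icc s m, π i ∈ Finset.Icc s m)
    (g : ℕ → ZMod lam) (g₀ : ZMod lam)
    (h : (ℕ → ZMod p) → ZMod lam)
    (hdep : ∀ u w : ℕ → ZMod p, (∀ t, 1 ≤ t → t ≤ s - 1 → u t = w t) → h u = h w)
    (f : (ℕ → ZMod p) → ZMod lam)
    (hf : ∀ v : ℕ → ZMod p,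
      f v = ((lam / p : ℕ) : ZMod lam) *
            (∑ i ∈ Finset.Ico s m, ((v (π i)).val : ZMod lam) * ((v (π (i + 1))).val : ZMod lam))
        + ∑ i ∈ Finset.Icc 1 m, g i * ((v i).val : ZMod lam) + g₀ + h v)
    (a : ZMod p → (ℕ → ZMod p) → ZMod lam)
    (ha : ∀ (γ : ZMod p) (v : ℕ → ZMod p),
      a γ v = f v + ((lam / p : ℕ) : ZMod lam) * ((v (π s)).val : ZMod lam) * (γ.val : ZMod lam))
    (i j : ℕ)
    (φ : ℕ) (hφmem : φ ∈ Finset.Icc (s + 1) m)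
    (hφne : dig p i (π φ) ≠ dig p j (π φ))
    (hφmin : ∀ l ∈ Finset.Icc s (φ - 1), dig p i (π l) = dig p j (π l)) :
    ∀ γ : ZMod p,
      (∑ δ ∈ Finset.Icc 1 (p - 1),
        eZMod lam
          (a γ (Function.update (dig p i) (π (φ - 1))
              (dig p i (π (φ - 1)) - (δ : ZMod p)))
           - a γ (Function.update (dig p j) (π (φ - 1))
              (dig p j (π (φ - 1)) - (δ : ZMod p)))))
      + eZMod lam (a γ (dig p i) - a γ (dig p j)) = 0 := by
  intro γ
  have : NeZero lam := ⟨hlam.ne'⟩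
  have : NeZero p := ⟨ne_zero_of_dvd_ne_zero hlam.ne' hpl⟩
  obtain ⟨hsφ, hφm⟩ := mem_Icc.1 hφmem
  have ha' : ∀ v, a γ v = scaledCastHom hpl (chainForm π s m v + v (π s) * γ)
      + ∑ k ∈ Icc 1 m, g k * ((v k).val : ZMod lam) + (g₀ + h v) := by
    intro v
    simp only [ha, hf, chainForm, map_add, map_sum, ← natCast_div_mul_val_mul_val hpl, mul_sum]
    ring
  have hh : ∀ v b, g₀ + h (update v (π (φ - 1)) b) = g₀ + h v := by
    intro v b
    have hq := mem_Icc.1 (hπ (φ - 1) (mem_Icc.2 ⟨by omega, by omega⟩))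
    exact congrArg _ (hdep _ _ fun t _ ht => update_of_ne (by omega) _ _)
  have hkey := fun δ : ZMod p => apply_update_sub_apply_update_of_chainForm (scaledCastHom hpl)
    (by omega) hφm γ (Icc 1 m) (fun k r => g k * (r.val : ZMod lam)) (fun v => g₀ + h v) hh ha' hφmin (-δ)
  simp only [← sub_eq_add_neg, neg_mul_comm, neg_sub] at hkey
  simp only [hkey]
  exact sum_Icc_eZMod_add_scaledCastHom hpl _ (sub_ne_zero.2 hφne.symm)

theorem stmt10 (p m s lam : ℕ) (hp : p.Prime) (hm : 1 ≤ m) (hs : 1 ≤ s) (hsm : s ≤ m)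
    (hlam : 0 < lam) (hpl : p ∣ lam)
    (π : Equiv.Perm ℕ) (hπ : ∀ i ∈ Finset.Icc s m, π i ∈ Finset.Icc s m)
    (g : ℕ → ZMod lam) (g₀ : ZMod lam)
    (h : (ℕ → ZMod p) → ZMod lam)
    (hdep : ∀ u w : ℕ → ZMod p, (∀ t, 1 ≤ t → t ≤ s - 1 → u t = w t) → h u = h w)
    (hs1 : s = 1 → ∀ u, h u = 0)
    (f : (ℕ → ZMod p) → ZMod lam)
    (hf : ∀ v : ℕ → ZMod p,
      f v = ((lam / p : ℕ) : ZMod lam) *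
            (∑ i ∈ Finset.Ico s m, ((v (π i)).val : ZMod lam) * ((v (π (i + 1))).val : ZMod lam))
        + ∑ i ∈ Finset.Icc 1 m, g i * ((v i).val : ZMod lam) + g₀ + h v)
    (a : ZMod p → (ℕ → ZMod p) → ZMod lam)
    (ha : ∀ (γ : ZMod p) (v : ℕ → ZMod p),
      a γ v = f v + ((lam / p : ℕ) : ZMod lam) * ((v (π s)).val : ZMod lam) * (γ.val : ZMod lam))
    (i j : ℕ) (hi : i < p ^ m) (hj : j < p ^ m)
    (heq : dig p i (π s) = dig p j (π s))
    (φ : ℕ) (hφmem : φ ∈ Finset.Icc (s + 1) m)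
    (hφne : dig p i (π φ) ≠ dig p j (π φ))
    (hφmin : ∀ l ∈ Finset.Icc s (φ - 1), dig p i (π l) = dig p j (π l)) :
    ∀ γ : ZMod p,
      (∑ δ ∈ Finset.Icc 1 (p - 1),
        eZMod lam
          (a γ (Function.update (dig p i) (π (φ - 1))
              (dig p i (π (φ - 1)) - (δ : ZMod p)))
           - a γ (Function.update (dig p j) (π (φ - 1))
              (dig p j (π (φ - 1)) - (δ : ZMod p)))))
      + eZMod lam (a γ (dig p i) - a γ (dig p j)) = 0 :=
  stmt10_general p m s lam hlam hpl π hπ g g₀ h hdep f hf a ha i j φ hφmem hφne hφmin
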